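/- Let Λ be an artin algebra and X a contravariantly finite subcategory of mod-Λ containing all finitely generated projective Λ-modules, closed under submodules, and of finite type with X = add(X̄). Then the global dimension of the X-relative Auslander algebra Aus(X) = End_Λ(X̄) is at most 2; equivalently, every object of mod-X admits a projective resolution of length at most 2 by representable functors. -/

import Mathlib

/- Common setup: right modules over a ring are realized as left modules over the opposite
ring; `mod-X` (finitely presented additive functors on a subcategory `X` of `mod-Λ`) is
realized inside the abelian category of contravariant `AddCommGrp`-valued functors on `X`. -/

open CategoryTheory CategoryTheory.Limits Opposite

universe u

noncomputable section

namespace RelAus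

attribute [local instance] CategoryTheory.Abelian.hasFiniteBiproducts

/-- `N` is a direct summand of `M`. -/
def IsDirectSummand {C : Type*} [Category C] (N M : C) : Prop :=
  ∃ (i : N ⟶ M) (r : M ⟶ N), i ≫ r = 𝟙 N

/-- `M ∈ add Xbar`: `M` is a direct summand of a finite direct sum of copies of `Xbar`. -/
def InAdd {R : Type u} [Ring R] (Xbar M : ModuleCat.{u} R) : Prop :=
  ∃ n : ℕ, IsDirectSummand M (ModuleCat.of R (Fin n → Xbar))

/-- `Xbar` is an additive generator of the class `𝒮` of modules: `𝒮 = add Xbar`. -/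
def IsAddGen {R : Type u} [Ring R] (𝒮 : Set (ModuleCat.{u} R)) (Xbar : ModuleCat.{u} R) : Prop :=
  Xbar ∈ 𝒮 ∧ ∀ M : ModuleCat.{u} R, M ∈ 𝒮 ↔ InAdd Xbar M

/-- An object of an additive category is indecomposable if it is nonzero and in any biproduct
decomposition one of the two factors is zero. -/
def IsIndecObj {C : Type*} [Category C] [Preadditive C] [HasBinaryBiproducts C] (N : C) : Prop :=
  ¬ IsZero N ∧ ∀ A B : C, Nonempty (N ≅ A ⊞ B) → IsZero A ∨ IsZero B

/-- The cardinality of the set of isomorphism classes of indecomposable direct summands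
of the module `T`. -/
def numIndecSummands {R : Type u} [Ring R] (T : ModuleCat.{u} R) : Cardinal :=
  Cardinal.mk {q : _root_.Quotient (isIsomorphicSetoid (ModuleCat.{u} R)) //
    ∃ N : ModuleCat.{u} R, Quotient.mk (isIsomorphicSetoid _) N = q ∧
      IsIndecObj N ∧ IsDirectSummand N T}

/-- The cardinality of the set of isomorphism classes of indecomposable (finitely generated)
projective `R`-modules. -/
def numIndecProj (R : Type u) [Ring R] : Cardinal :=
  Cardinal.mk {q : _root_.Quotient (isIsomorphicSetoid (ModuleCat.{u} R)) //
    ∃ N : ModuleCat.{u} R, Quotient.mk (isIsomorphicSetoid _) N = q ∧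
      IsIndecObj N ∧ Projective N ∧ Module.Finite R N}

/-- `T` has projective dimension at most one: there is a short exact sequence
`0 → P₁ → P₀ → T → 0` with `P₁`, `P₀` projective. -/
def ModPdLeOne {R : Type u} [Ring R] (T : ModuleCat.{u} R) : Prop :=
  ∃ (P₁ P₀ : ModuleCat.{u} R) (i : P₁ ⟶ P₀) (p : P₀ ⟶ T) (w : i ≫ p = 0),
    Projective P₁ ∧ Projective P₀ ∧ (ShortComplex.mk i p w).ShortExact

/-- `T` has injective dimension at most one: there is a short exact sequence
`0 → T → I₀ → I₁ → 0` with `I₀`, `I₁` injective. -/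
def ModIdLeOne {R : Type u} [Ring R] (T : ModuleCat.{u} R) : Prop :=
  ∃ (I₀ I₁ : ModuleCat.{u} R) (i : T ⟶ I₀) (p : I₀ ⟶ I₁) (w : i ≫ p = 0),
    Injective I₀ ∧ Injective I₁ ∧ (ShortComplex.mk i p w).ShortExact

/-- `T` is rigid, i.e. `Ext¹_R(T,T) = 0`: every self-extension of `T` splits. -/
def ModRigid {R : Type u} [Ring R] (T : ModuleCat.{u} R) : Prop :=
  ∀ (E : ModuleCat.{u} R) (i : T ⟶ E) (p : E ⟶ T) (w : i ≫ p = 0),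
    (ShortComplex.mk i p w).ShortExact → Nonempty (ShortComplex.mk i p w).Splitting

/-- `T` is a tilting `R`-module: `pd T ≤ 1`, `Ext¹_R(T,T) = 0`, and the number of isomorphism
classes of indecomposable direct summands of `T` equals the number of isomorphism classes of
indecomposable projective `R`-modules. -/
structure IsTiltingModule {R : Type u} [Ring R] (T : ModuleCat.{u} R) : Prop where
  pd_le_one : ModPdLeOne T
  rigid : ModRigid T
  summands : numIndecSummands T = numIndecProj R

/-- `T` is a cotilting `R`-module: `id T ≤ 1`, `Ext¹_R(T,T) = 0`, and the same counting
condition as for tilting modules. -/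
structure IsCotiltingModule {R : Type u} [Ring R] (T : ModuleCat.{u} R) : Prop where
  id_le_one : ModIdLeOne T
  rigid : ModRigid T
  summands : numIndecSummands T = numIndecProj R

/-- `M` is a (finitely generated) Gorenstein projective `R`-module: `M` is a syzygy of a
totally acyclic complex of finitely generated projective modules, i.e. of an acyclic complex
`P` of projectives such that `Hom_R(P, Q)` is acyclic for every projective `Q`. -/
def IsGProj {R : Type u} [Ring R] (M : ModuleCat.{u} R) : Prop :=
  ∃ P : CochainComplex (ModuleCat.{u} R) ℤ,
    (∀ n, Projective (P.X n)) ∧ (∀ n, Module.Finite R (P.X n)) ∧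
    (∀ n, P.ExactAt n) ∧
    (∀ Q : ModuleCat.{u} R, Projective Q →
      ∀ n, (((preadditiveYoneda.obj Q).mapHomologicalComplex _).obj P.op).ExactAt n) ∧
    ∃ n : ℤ, Nonempty (M ≅ kernel (P.d n (n + 1)))

/-- The class of finitely generated Gorenstein projective `R`-modules.  Applied to `R = Λᵐᵒᵖ`
this is `Gprj-Λ`, the Gorenstein projective right `Λ`-modules. -/
def GprjSet (R : Type u) [Ring R] : Set (ModuleCat.{u} R) :=
  {M | Module.Finite R M ∧ IsGProj M}

/-- The category of finitely generated `R`-modules. -/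
abbrev fgMod (R : Type u) [Ring R] := ObjectProperty.FullSubcategory (fun M : ModuleCat.{u} R => Module.Finite R M)

/-- `M` is basic: no indecomposable module occurs twice in a direct sum decomposition. -/
def IsBasic {R : Type u} [Ring R] (M : ModuleCat.{u} R) : Prop :=
  ∀ (N A : ModuleCat.{u} R), IsIndecObj N → ¬ Nonempty (M ≅ (N ⊞ N) ⊞ A)

/-- Two rings are Morita equivalent if their categories of finitely generated modules are
equivalent.  Applied to the opposite rings, this says that the categories of finitely
generated right modules are equivalent. -/
def MoritaEq (R S : Type u) [Ring R] [Ring S] : Prop :=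
  Nonempty (fgMod R ≌ fgMod S)

/-- A ring `A` is right coherent: every finitely generated right ideal of `A` (i.e. left ideal
of `Aᵐᵒᵖ`) is finitely presented as a right `A`-module. -/
def RightCoherent (A : Type u) [Ring A] : Prop :=
  ∀ I : Ideal Aᵐᵒᵖ, I.FG → Module.FinitePresentation Aᵐᵒᵖ I

/-- `Λ` is an (Iwanaga-)Gorenstein ring of G-dimension one: the injective dimension of `Λ`
as a right module over itself and as a left module over itself are both equal to `1`. -/
def GorensteinDimOne (Λ : Type u) [Ring Λ] : Prop :=
  (ModIdLeOne (ModuleCat.of Λᵐᵒᵖ Λ) ∧ ¬ Injective (ModuleCat.of Λᵐᵒᵖ Λ)) ∧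
  (ModIdLeOne (ModuleCat.of Λ Λ) ∧ ¬ Injective (ModuleCat.of Λ Λ))

variable {Λ : Type u} [Ring Λ]

/-- The category of right `Λ`-modules, realized as left modules over `Λᵐᵒᵖ`. -/
abbrev RMod (Λ : Type u) [Ring Λ] := ModuleCat.{u} Λᵐᵒᵖ

/-- Given the end `ε : Q ⟶ Xbar` of a projective presentation of `Xbar`, the evaluation
`T = ζ^X_{Xbar}(Xbar)` of the intermediate extension at `Xbar`: concretely, it is the set of
endomorphisms of `Xbar` that factor through `ε`, which is a right ideal of
`Γ = End_Λ(Xbar)`, i.e. a `Γᵐᵒᵖ`-submodule of `Γ` (right `Γ`-modules being realized as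
`Γᵐᵒᵖ`-modules). -/
def zetaEvalSub {Q Xbar : RMod Λ} (ε : Q ⟶ Xbar) :
    Submodule (End Xbar)ᵐᵒᵖ (End Xbar) where
  carrier := {g : End Xbar | ∃ h : Xbar ⟶ Q, h ≫ ε = g}
  add_mem' := by
    rintro a b ⟨h₁, rfl⟩ ⟨h₂, rfl⟩
    exact ⟨h₁ + h₂, by simp [Preadditive.add_comp]⟩
  zero_mem' := ⟨0, by simp⟩
  smul_mem' := by
    rintro e g ⟨h, rfl⟩
    exact ⟨e.unop ≫ h, by simp [Category.assoc]⟩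

/-- `Xm` lies in `⊥Λ`, i.e. `Ext^i_Λ(Xm, Λ) = 0` for all `i ≥ 1`, where `Λ` is regarded as a
right module over itself. -/
def MemPerp [HasExt.{u+1} (RMod Λ)] (Xm : RMod Λ) : Prop :=
  ∀ i : ℕ, 1 ≤ i → ∀ x : Abelian.Ext Xm (ModuleCat.of Λᵐᵒᵖ Λ) i, x = 0

/-- The standing hypotheses on a class `𝒳` of right `Λ`-modules: it consists of modules
belonging to `mod-Λ` (described by the predicate `memP`), it is additively closed and closed
under direct summands (hence a full additive subcategory of `mod-Λ` closed under summands),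
it contains all the projective modules of `mod-Λ`, and it is contravariantly finite in
`mod-Λ`, i.e. every module in `mod-Λ` has a right `𝒳`-approximation. -/
structure GoodSub (memP : RMod Λ → Prop) (𝒳 : Set (RMod Λ)) : Prop where
  mem_mod : ∀ M ∈ 𝒳, memP M
  sum_mem : ∀ M N : RMod Λ, M ∈ 𝒳 → N ∈ 𝒳 → ModuleCat.of Λᵐᵒᵖ (M × N) ∈ 𝒳
  summand_mem : ∀ M N : RMod Λ, M ∈ 𝒳 → IsDirectSummand N M → N ∈ 𝒳
  proj_mem : ∀ P : RMod Λ, memP P → Projective P → P ∈ 𝒳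
  approx : ∀ M : RMod Λ, memP M → ∃ X₀ ∈ 𝒳, ∃ f : X₀ ⟶ M,
    ∀ X' ∈ 𝒳, ∀ g : X' ⟶ M, ∃ h : X' ⟶ X₀, h ≫ f = g

/-- `𝒳` is closed under syzygies: for every short exact sequence `0 → Ω → P → X' → 0` with
`X' ∈ 𝒳` and `P` a finitely generated projective module, `Ω ∈ 𝒳`. -/
def ClosedUnderSyzygies (𝒳 : Set (RMod Λ)) : Prop :=
  ∀ (Ω P X' : RMod Λ), X' ∈ 𝒳 → Projective P → Module.Finite Λᵐᵒᵖ P →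
    ∀ (i : Ω ⟶ P) (p : P ⟶ X') (w : i ≫ p = 0),
      (ShortComplex.mk i p w).ShortExact → Ω ∈ 𝒳

/-- `𝒳` is closed under submodules. -/
def ClosedUnderSubmodules (𝒳 : Set (RMod Λ)) : Prop :=
  ∀ (N X' : RMod Λ), X' ∈ 𝒳 → ∀ i : N ⟶ X', Mono i → N ∈ 𝒳

section FunctorCategory

variable (𝒳 : Set (RMod Λ))

/-- The subcategory `X`, as a full subcategory of the category of right `Λ`-modules. -/
abbrev XCat := ObjectProperty.FullSubcategory (fun M : RMod Λ => M ∈ 𝒳)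

/-- The ambient abelian category of contravariant `AddCommGrp`-valued functors on `X`;
`mod-X` is its full subcategory of finitely presented functors (see `FinPres`). -/
abbrev FunCat := (XCat 𝒳)ᵒᵖ ⥤ AddCommGrpCat.{u}

/-- The restricted Yoneda functor `M ↦ Hom_Λ(-, M)|_X`.  On an arbitrary module `M` it
gives `θ_ρ(M)`; on objects of `X` it gives the representable functors, which are exactly the
projective objects of `mod-X`. -/
def resY : RMod Λ ⥤ FunCat 𝒳 :=
  preadditiveYoneda ⋙
    (Functor.whiskeringLeft (XCat 𝒳)ᵒᵖ (RMod Λ)ᵒᵖ AddCommGrpCat.{u}).obj (ObjectProperty.ι _).op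

/-- `F` is a finitely presented functor on `X`, i.e. an object of `mod-X`: there is an exact
sequence `Hom(-,X₁)|_X ⟶ Hom(-,X₀)|_X ⟶ F ⟶ 0` with `X₁, X₀ ∈ 𝒳`. -/
def FinPres (F : FunCat 𝒳) : Prop :=
  ∃ (X₁ X₀ : RMod Λ) (_ : X₁ ∈ 𝒳) (_ : X₀ ∈ 𝒳) (d : X₁ ⟶ X₀),
    Nonempty (F ≅ cokernel ((resY 𝒳).map d))

/-- `F` vanishes on all projective `Λ`-modules, i.e. `F` lies in `mod₀-X`. -/
def Vanish0 (F : FunCat 𝒳) : Prop :=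
  ∀ P : XCat 𝒳, Projective P.obj → IsZero (F.obj (op P))

lemma resY_comp_zero {P Q M : RMod Λ} (d : P ⟶ Q) (ε : Q ⟶ M) (w : d ≫ ε = 0) :
    (resY 𝒳).map d ≫ (resY 𝒳).map ε = 0 := by
  ext Z g
  erw [comp_apply]
  show (_ ≫ d) ≫ ε = (0 : ((resY 𝒳).obj M).obj Z)
  first
    | (erw [Category.assoc, w, comp_zero]; rfl)
    | (erw [Category.assoc, w, comp_zero])
    | (simp [resY, w])

/-- Given a projective presentation `P ⟶ Q ⟶ M ⟶ 0` of `M`, the canonical natural map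
`γ_M : θ_λ(M) ⟶ θ_ρ(M)` induced by the identity of `M`, where
`θ_λ(M) = coker(Hom(-,P)|_X → Hom(-,Q)|_X)` and `θ_ρ(M) = Hom(-,M)|_X`. -/
def gammaMap {P Q M : RMod Λ} (d : P ⟶ Q) (ε : Q ⟶ M) (w : d ≫ ε = 0) :
    cokernel ((resY 𝒳).map d) ⟶ (resY 𝒳).obj M :=
  cokernel.desc _ ((resY 𝒳).map ε) (resY_comp_zero 𝒳 d ε w)

/-- The intermediate extension `ζ^X_M := Im (γ_M)`. -/
def zetaObj {P Q M : RMod Λ} (d : P ⟶ Q) (ε : Q ⟶ M) (w : d ≫ ε = 0) : FunCat 𝒳 :=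
  image (gammaMap 𝒳 d ε w)

/-- The unit map `coker(Hom(-,X₁)|_X → Hom(-,X₀)|_X) ⟶ Hom(-, coker(X₁ → X₀))|_X`, i.e.
the unit `F ⟶ θ_ρ θ (F)` of the adjunction `(θ, θ_ρ)` evaluated on a functor presented by
`d' : X₁ ⟶ X₀`. -/
def unitMap {X₁ X₀ : RMod Λ} (d' : X₁ ⟶ X₀) :
    cokernel ((resY 𝒳).map d') ⟶ (resY 𝒳).obj (cokernel d') :=
  cokernel.desc _ ((resY 𝒳).map (cokernel.π d'))
    (resY_comp_zero 𝒳 d' (cokernel.π d') (cokernel.condition d'))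

/-- In `mod-X`, `F` has projective dimension at most one: there is a short exact sequence
`0 → Hom(-,X₁)|_X → Hom(-,X₀)|_X → F → 0` by representable functors (the projective objects
of `mod-X`). -/
def PdLeOne (F : FunCat 𝒳) : Prop :=
  ∃ (X₁ X₀ : RMod Λ) (_ : X₁ ∈ 𝒳) (_ : X₀ ∈ 𝒳) (a : (resY 𝒳).obj X₁ ⟶ (resY 𝒳).obj X₀)
    (b : (resY 𝒳).obj X₀ ⟶ F) (w : a ≫ b = 0), (ShortComplex.mk a b w).ShortExact

/-- `F` lies in `Ker ℓ_λ`, where `ℓ_λ` is the left adjoint of the inclusion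
`ℓ : mod₀-X → mod-X`; equivalently (by adjunction), `F` admits no nonzero morphism to any
object of `mod₀-X`. -/
def MemKerEllLambda (F : FunCat 𝒳) : Prop :=
  ∀ G : FunCat 𝒳, FinPres 𝒳 G → Vanish0 𝒳 G → ∀ η : F ⟶ G, η = 0

/-- `F` lies in `Ker ℓ_ρ`, where `ℓ_ρ` is the right adjoint of the inclusion
`ℓ : mod₀-X → mod-X`; equivalently (by adjunction), `F` receives no nonzero morphism from
any object of `mod₀-X`. -/
def MemKerEllRho (F : FunCat 𝒳) : Prop :=
  ∀ G : FunCat 𝒳, FinPres 𝒳 G → Vanish0 𝒳 G → ∀ η : G ⟶ F, η = 0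

/-- `F` is a projective object of `mod-X`: every epimorphism of `mod-X` onto `F`'s target
lifts. -/
def ProjRelModX (F : FunCat 𝒳) : Prop :=
  ∀ (G H : FunCat 𝒳), FinPres 𝒳 G → FinPres 𝒳 H → ∀ e : G ⟶ H, Epi e →
    ∀ f : F ⟶ H, ∃ g : F ⟶ G, g ≫ e = f

end FunctorCategory

/-! A presentation `Hom(-,X₁)|_X → Hom(-,X₀)|_X → F → 0` comes from some `d : X₁ ⟶ X₀`.
Since `X` is closed under submodules, `ker d ∈ X`, and since `M ↦ Hom(-, M)|_X` is left exact,
`Hom(-, ker d)|_X` is the kernel of `Hom(-, d)|_X`: this completes a projective resolution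
of length two. -/

lemma exact_of_forall_exact_evaluation {C : Type*} [Category C]
    (S : ShortComplex (C ⥤ AddCommGrpCat.{u}))
    (h : ∀ X : C, (S.map ((evaluation C AddCommGrpCat.{u}).obj X)).Exact) : S.Exact := by
  rw [ShortComplex.exact_iff_isZero_homology, Functor.isZero_iff]
  intro X
  exact (ShortComplex.exact_iff_isZero_homology _ |>.mp (h X)).of_iso
    (S.mapHomologyIso ((evaluation C AddCommGrpCat.{u}).obj X)).symm

lemma exact_cokernel_π_comp_inv {C : Type*} [Category C] [Abelian C] {A B F : C} (f : A ⟶ B)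
    (e : F ≅ cokernel f) :
    (ShortComplex.mk f (cokernel.π f ≫ e.inv) (by simp)).Exact :=
  ShortComplex.exact_of_iso
    (ShortComplex.isoMk (S₁ := ShortComplex.mk f (cokernel.π f) (cokernel.condition f))
      (Iso.refl _) (Iso.refl _) e.symm (by simp) (by simp))
    (ShortComplex.exact_of_g_is_cokernel _ (cokernelIsCokernel f))

section LeftExactness

variable (𝒳 : Set (RMod Λ))

instance mono_resY_map {M N : RMod Λ} (i : M ⟶ N) [Mono i] : Mono ((resY 𝒳).map i) := by
  have (Z : (XCat 𝒳)ᵒᵖ) : Mono (((resY 𝒳).map i).app Z) := by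
    rw [AddCommGrpCat.mono_iff_injective]
    intro x y (hxy : x ≫ i = y ≫ i)
    exact (cancel_mono i).mp hxy
  exact NatTrans.mono_of_mono_app _

lemma exact_resY_map_kernel_ι {M N : RMod Λ} (d : M ⟶ N) :
    (ShortComplex.mk ((resY 𝒳).map (kernel.ι d)) ((resY 𝒳).map d)
      (resY_comp_zero 𝒳 _ _ (kernel.condition d))).Exact := by
  refine exact_of_forall_exact_evaluation _ (fun Z => ?_)
  rw [ShortComplex.ab_exact_iff]
  intro (x : Z.unop.obj ⟶ M) (hx : x ≫ d = 0)
  exact ⟨kernel.lift d x hx, kernel.lift_ι d x hx⟩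

end LeftExactness

theorem statement10_general
    (Λ : Type u) [Ring Λ]
    (𝒳 : Set (RMod Λ))
    (hsub : ClosedUnderSubmodules 𝒳) :
    ∀ F : FunCat 𝒳, FinPres 𝒳 F →
      ∃ (X₂ X₁ X₀ : RMod Λ) (_ : X₂ ∈ 𝒳) (_ : X₁ ∈ 𝒳) (_ : X₀ ∈ 𝒳)
        (a : (resY 𝒳).obj X₂ ⟶ (resY 𝒳).obj X₁) (b : (resY 𝒳).obj X₁ ⟶ (resY 𝒳).obj X₀)
        (c : (resY 𝒳).obj X₀ ⟶ F) (wab : a ≫ b = 0) (wbc : b ≫ c = 0),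
        Mono a ∧ Epi c ∧
        (ShortComplex.mk a b wab).Exact ∧ (ShortComplex.mk b c wbc).Exact := by
  rintro F ⟨X₁, X₀, hX₁, hX₀, d, ⟨e⟩⟩
  have hK : (kernel d : RMod Λ) ∈ 𝒳 := hsub _ _ hX₁ (kernel.ι d) inferInstance
  exact ⟨kernel d, X₁, X₀, hK, hX₁, hX₀, (resY 𝒳).map (kernel.ι d), (resY 𝒳).map d,
    cokernel.π _ ≫ e.inv, _, by simp, inferInstance, epi_comp _ _,
    exact_resY_map_kernel_ι 𝒳 d, exact_cokernel_π_comp_inv _ e⟩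

/-- If `X ⊇ prj-Λ` is contravariantly finite, closed under submodules and of
finite type, then the global dimension of the relative Auslander algebra is at most `2`:
every object of `mod-X` admits a projective resolution
`0 → Hom(-,X₂)|_X → Hom(-,X₁)|_X → Hom(-,X₀)|_X → F → 0` of length at most `2` by
representable functors. -/
theorem statement10 (R₀ : Type u) [CommRing R₀] [IsArtinianRing R₀]
    (Λ : Type u) [Ring Λ] [Algebra R₀ Λ] [Module.Finite R₀ Λ]
    (𝒳 : Set (RMod Λ))
    (h𝒳 : GoodSub (fun M : RMod Λ => Module.Finite Λᵐᵒᵖ M) 𝒳)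
    (hsub : ClosedUnderSubmodules 𝒳)
    (Xbar : RMod Λ) (hgen : IsAddGen 𝒳 Xbar) :
    ∀ F : FunCat 𝒳, FinPres 𝒳 F →
      ∃ (X₂ X₁ X₀ : RMod Λ) (_ : X₂ ∈ 𝒳) (_ : X₁ ∈ 𝒳) (_ : X₀ ∈ 𝒳)
        (a : (resY 𝒳).obj X₂ ⟶ (resY 𝒳).obj X₁) (b : (resY 𝒳).obj X₁ ⟶ (resY 𝒳).obj X₀)
        (c : (resY 𝒳).obj X₀ ⟶ F) (wab : a ≫ b = 0) (wbc : b ≫ c = 0),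
        Mono a ∧ Epi c ∧
        (ShortComplex.mk a b wab).Exact ∧ (ShortComplex.mk b c wbc).Exact :=
  statement10_general Λ 𝒳 hsub

end RelAus
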